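/- If p = 2 and either (e = 1, m = 1) or (e ≥ 1, m ≥ 2), the linearized Wenger graph L_m(2^e) contains a cycle of length 8, and hence (since it has no 4- or 6-cycles) has girth 8. -/
import Mathlib


/-- In the linearized Wenger graph, point `P` is adjacent to line `L` iff
`l_k + p_k = p_1^{p^{k-2}} l_1` for `2 ≤ k ≤ m+1`. -/
def lwAdj (p : ℕ) {F : Type} [Field F] {m : ℕ} (P L : Fin (m + 1) → F) : Prop :=
  ∀ k : Fin m, L k.succ + P k.succ = P 0 ^ p ^ (k : ℕ) * L 0

/-- The linearized Wenger graph `L_m(q)` as a bipartite graph on points ⊕ lines. -/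
def lwGraph (p : ℕ) (F : Type) [Field F] (m : ℕ) :
    SimpleGraph ((Fin (m + 1) → F) ⊕ (Fin (m + 1) → F)) :=
  SimpleGraph.fromRel fun v w => match v, w with
    | Sum.inl P, Sum.inr L => lwAdj p P L
    | _, _ => False

open SimpleGraph Walk Sum

section Aux

variable {F : Type} [Field F] {m : ℕ}

lemma line_eq {P L L' : Fin (m + 1) → F} (h1 : lwAdj 2 P L) (h2 : lwAdj 2 P L')
    (h0 : L 0 = L' 0) : L = L' := by
  funext i
  refine Fin.cases h0 (fun k => ?_) i
  have e1 := h1 k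
  have e2 := h2 k
  rw [← h0] at e2
  exact add_right_cancel (e1.trans e2.symm)

lemma point_eq {P P' L : Fin (m + 1) → F} (h1 : lwAdj 2 P L) (h2 : lwAdj 2 P' L)
    (h0 : P 0 = P' 0) : P = P' := by
  funext i
  refine Fin.cases h0 (fun k => ?_) i
  have e1 := h1 k
  have e2 := h2 k
  rw [← h0] at e2
  exact add_left_cancel (e1.trans e2.symm)

lemma no_four (hm : 0 < m) {P P' L L' : Fin (m + 1) → F}
    (h1 : lwAdj 2 P L) (h2 : lwAdj 2 P L') (h3 : lwAdj 2 P' L') (h4 : lwAdj 2 P' L)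
    (hP : P ≠ P') (hL : L ≠ L') : False := by
  have hL0 : L 0 ≠ L' 0 := fun h0 => hL (line_eq h1 h2 h0)
  have key : P 0 = P' 0 := by
    have e1 := h1 ⟨0, hm⟩
    have e2 := h2 ⟨0, hm⟩
    have e3 := h3 ⟨0, hm⟩
    have e4 := h4 ⟨0, hm⟩
    norm_num at e1 e2 e3 e4
    have hz : (P 0 - P' 0) * (L 0 - L' 0) = 0 := by linear_combination e2 - e1 + e4 - e3
    rcases mul_eq_zero.1 hz with hx | hx
    · exact sub_eq_zero.1 hx
    · exact absurd (sub_eq_zero.1 hx) hL0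
  exact hP (point_eq h1 h4 key)

lemma no_six [CharP F 2] (hm : 0 < m)
    (hcase : 2 ≤ m ∨ ∀ x : F, x = 0 ∨ x = 1)
    {P1 P2 P3 L1 L2 L3 : Fin (m + 1) → F}
    (h1 : lwAdj 2 P1 L1) (h2 : lwAdj 2 P2 L1) (h3 : lwAdj 2 P2 L2)
    (h4 : lwAdj 2 P3 L2) (h5 : lwAdj 2 P3 L3) (h6 : lwAdj 2 P1 L3)
    (hP12 : P1 ≠ P2) (hP23 : P2 ≠ P3) (hP13 : P1 ≠ P3)
    (hL12 : L1 ≠ L2) (hL23 : L2 ≠ L3) (hL13 : L1 ≠ L3) : False := by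
  have ha : P1 0 - P2 0 ≠ 0 := sub_ne_zero.2 fun h0 => hP12 (point_eq h1 h2 h0)
  have hb : P2 0 - P3 0 ≠ 0 := sub_ne_zero.2 fun h0 => hP23 (point_eq h3 h4 h0)
  have hc : (P1 0 - P2 0) + (P2 0 - P3 0) ≠ 0 := by
    have h13 : P1 0 - P3 0 ≠ 0 := sub_ne_zero.2 fun h0 => hP13 (point_eq h6 h5 h0)
    intro hz; apply h13; linear_combination hz
  have hu : L1 0 - L3 0 ≠ 0 := sub_ne_zero.2 fun h0 => hL13 (line_eq h1 h6 h0)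
  have hv : L3 0 - L2 0 ≠ 0 := sub_ne_zero.2 fun h0 => hL23 (line_eq h5 h4 h0).symm
  have frob : ∀ (x y : F) (n : ℕ), (x - y) ^ 2 ^ n = x ^ 2 ^ n - y ^ 2 ^ n := by
    intro x y n
    rw [CharTwo.sub_eq_add, CharTwo.sub_eq_add, add_pow_char_pow]
  have key : ∀ k : Fin m,
      (P1 0 - P2 0) ^ 2 ^ (k : ℕ) * (L1 0 - L3 0)
        = (P2 0 - P3 0) ^ 2 ^ (k : ℕ) * (L3 0 - L2 0) := by
    intro k
    have e1 := h1 k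
    have e2 := h2 k
    have e3 := h3 k
    have e4 := h4 k
    have e5 := h5 k
    have e6 := h6 k
    rw [frob, frob]
    linear_combination e2 - e1 + e4 - e3 + e6 - e5
  rcases hcase with hm2 | hsmall
  · have e0 := key ⟨0, hm⟩
    have e1 := key ⟨1, hm2⟩
    norm_num at e0 e1
    have hz : ((P1 0 - P2 0) - (P2 0 - P3 0)) * ((P2 0 - P3 0) * (L3 0 - L2 0)) = 0 := by
      linear_combination e1 - (P1 0 - P2 0) * e0
    rcases mul_eq_zero.1 hz with hx | hx
    · have hab : P1 0 - P2 0 = P2 0 - P3 0 := sub_eq_zero.1 hx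
      apply hc
      rw [hab]
      exact CharTwo.add_self_eq_zero _
    · rcases mul_eq_zero.1 hx with hx' | hx'
      · exact hb hx'
      · exact hv hx'
  · rcases hsmall (P1 0 - P2 0) with hx | hx
    · exact ha hx
    rcases hsmall (P2 0 - P3 0) with hy | hy
    · exact hb hy
    apply hc
    rw [hx, hy]
    exact CharTwo.add_self_eq_zero 1

lemma adj_inl {P : Fin (m + 1) → F} {y} (h : (lwGraph 2 F m).Adj (Sum.inl P) y) :
    ∃ L, y = Sum.inr L ∧ lwAdj 2 P L := by
  cases y with
  | inl Q => exfalso; simpa [lwGraph] using h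
  | inr L => exact ⟨L, rfl, by simpa [lwGraph] using h⟩

lemma adj_inr {L : Fin (m + 1) → F} {y} (h : (lwGraph 2 F m).Adj (Sum.inr L) y) :
    ∃ P, y = Sum.inl P ∧ lwAdj 2 P L := by
  cases y with
  | inl P => exact ⟨P, rfl, by simpa [lwGraph] using h⟩
  | inr L' => exfalso; simpa [lwGraph] using h

lemma adj_step {P L : Fin (m + 1) → F} (h : lwAdj 2 P L) :
    (lwGraph 2 F m).Adj (Sum.inl P) (Sum.inr L) := by
  simp only [lwGraph, SimpleGraph.fromRel_adj]
  exact ⟨by simp, Or.inl h⟩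

lemma walk_even {x y} (w : (lwGraph 2 F m).Walk x y) :
    Even w.length ↔ x.isLeft = y.isLeft := by
  induction w with
  | nil => simp
  | @cons u b c h p ih =>
    have hside : u.isLeft = !b.isLeft := by
      cases u <;> cases b <;> simp_all [lwGraph]
    rw [Walk.length_cons, Nat.even_add_one, ih, hside]
    cases hb : b.isLeft <;> cases hy : c.isLeft <;> simp

lemma length_ne_four (hm : 0 < m) {a} (w : (lwGraph 2 F m).Walk a a) (hw : w.IsCycle) :
    w.length ≠ 4 := by
  intro hlen
  cases w with
  | nil => simp at hlen
  | cons h1 w =>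
    cases w with
    | nil => simp at hlen
    | cons h2 w =>
      cases w with
      | nil => simp at hlen
      | cons h3 w =>
        cases w with
        | nil => simp at hlen
        | cons h4 w =>
          cases w with
          | cons h5 w => simp at hlen
          | nil =>
            have hnd := hw.support_nodup
            simp only [Walk.support_cons, Walk.support_nil, List.tail_cons,
              List.nodup_cons, List.mem_cons, List.not_mem_nil, List.mem_singleton,
              List.nodup_nil, not_or, or_false, and_true, not_false_iff] at hnd
            obtain ⟨⟨hbc, hbd, hba⟩, ⟨hcd, hca⟩, hda⟩ := hnd
            clear hw hlen
            rename_i b c d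
            cases a with
            | inl P1 =>
              obtain ⟨L1, rfl, a1⟩ := adj_inl h1
              obtain ⟨P2, rfl, a2⟩ := adj_inr h2
              obtain ⟨L2, rfl, a3⟩ := adj_inl h3
              obtain ⟨P', heq, a4⟩ := adj_inr h4
              obtain rfl : P' = P1 := by injection heq.symm
              exact no_four hm a1 a4 a3 a2 (fun hp => hca (by rw [hp]))
                (fun hl => hbd (by rw [hl]))
            | inr L1 =>
              obtain ⟨P1, rfl, a1⟩ := adj_inr h1
              obtain ⟨L2, rfl, a2⟩ := adj_inl h2
              obtain ⟨P2, rfl, a3⟩ := adj_inr h3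
              obtain ⟨L', heq, a4⟩ := adj_inl h4
              obtain rfl : L' = L1 := by injection heq.symm
              exact no_four hm a1 a2 a3 a4 (fun hp => hbd (by rw [hp]))
                (fun hl => hca (by rw [hl]))

lemma length_ne_six [CharP F 2] (hm : 0 < m)
    (hcase : 2 ≤ m ∨ ∀ x : F, x = 0 ∨ x = 1)
    {a} (w : (lwGraph 2 F m).Walk a a) (hw : w.IsCycle) :
    w.length ≠ 6 := by
  intro hlen
  cases w with
  | nil => simp at hlen
  | cons h1 w =>
    cases w with
    | nil => simp at hlen
    | cons h2 w =>
      cases w with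
      | nil => simp at hlen
      | cons h3 w =>
        cases w with
        | nil => simp at hlen
        | cons h4 w =>
          cases w with
          | nil => simp at hlen
          | cons h5 w =>
            cases w with
            | nil => simp at hlen
            | cons h6 w =>
              cases w with
              | cons h7 w => simp at hlen
              | nil =>
                have hnd := hw.support_nodup
                simp only [Walk.support_cons, Walk.support_nil, List.tail_cons,
                  List.nodup_cons, List.mem_cons, List.not_mem_nil, List.mem_singleton,
                  List.nodup_nil, not_or, or_false, and_true, not_false_iff] at hnd
                obtain ⟨⟨hbc, hbd, hbe, hbf, hba⟩, ⟨hcd, hce, hcf, hca⟩,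
                  ⟨hde, hdf, hda⟩, ⟨hef, hea⟩, hfa⟩ := hnd
                clear hw hlen
                rename_i b c d e' f
                cases a with
                | inl P1 =>
                  obtain ⟨L1, rfl, a1⟩ := adj_inl h1
                  obtain ⟨P2, rfl, a2⟩ := adj_inr h2
                  obtain ⟨L2, rfl, a3⟩ := adj_inl h3
                  obtain ⟨P3, rfl, a4⟩ := adj_inr h4
                  obtain ⟨L3, rfl, a5⟩ := adj_inl h5
                  obtain ⟨P', heq, a6⟩ := adj_inr h6
                  obtain rfl : P' = P1 := by injection heq.symm
                  exact no_six hm hcase a1 a2 a3 a4 a5 a6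
                    (fun hp => hca (by rw [hp])) (fun hp => hce (by rw [hp]))
                    (fun hp => hea (by rw [hp]))
                    (fun hl => hbd (by rw [hl])) (fun hl => hdf (by rw [hl]))
                    (fun hl => hbf (by rw [hl]))
                | inr L1 =>
                  obtain ⟨P1, rfl, a1⟩ := adj_inr h1
                  obtain ⟨L2, rfl, a2⟩ := adj_inl h2
                  obtain ⟨P2, rfl, a3⟩ := adj_inr h3
                  obtain ⟨L3, rfl, a4⟩ := adj_inl h4
                  obtain ⟨P3, rfl, a5⟩ := adj_inr h5
                  obtain ⟨L', heq, a6⟩ := adj_inl h6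
                  obtain rfl : L' = L1 := by injection heq.symm
                  exact no_six hm hcase a2 a3 a4 a5 a6 a1
                    (fun hp => hbd (by rw [hp])) (fun hp => hdf (by rw [hp]))
                    (fun hp => hbf (by rw [hp]))
                    (fun hl => hce (by rw [hl])) (fun hl => hea (by rw [hl]))
                    (fun hl => hca (by rw [hl]))

/-- The point/line `(0,0,…,0)`. -/
def wc0 {F : Type} [Field F] (m : ℕ) : Fin (m + 1) → F := fun _ => 0

/-- The point/line `(1,1,…,1)`. -/
def wc1 {F : Type} [Field F] (m : ℕ) : Fin (m + 1) → F := fun _ => 1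

/-- The point/line `(1,0,…,0)`. -/
def wd10 {F : Type} [Field F] (m : ℕ) : Fin (m + 1) → F := fun i => if i = 0 then 1 else 0

/-- The point/line `(0,1,…,1)`. -/
def wd01 {F : Type} [Field F] (m : ℕ) : Fin (m + 1) → F := fun i => if i = 0 then 0 else 1

lemma eight_cycle [CharP F 2] (hm : 0 < m) :
    ∃ (v : (Fin (m + 1) → F) ⊕ (Fin (m + 1) → F))
      (c : (lwGraph 2 F m).Walk v v), c.IsCycle ∧ c.length = 8 := by
  have hpow0 : ∀ k : ℕ, (0 : F) ^ 2 ^ k = 0 := fun k => zero_pow (pow_ne_zero k two_ne_zero)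
  have a11 : lwAdj 2 (wc0 m) (wc0 m (F := F)) := fun k => by
    simp [wc0, hpow0]
  have a21 : lwAdj 2 (wd10 m) (wc0 m (F := F)) := fun k => by
    simp [wd10, wc0, Fin.succ_ne_zero]
  have a22 : lwAdj 2 (wd10 m) (wc1 m (F := F)) := fun k => by
    simp [wd10, wc1, Fin.succ_ne_zero]
  have a32 : lwAdj 2 (wd01 m) (wc1 m (F := F)) := fun k => by
    simp [wd01, wc1, Fin.succ_ne_zero, hpow0, CharTwo.add_self_eq_zero]
  have a33 : lwAdj 2 (wd01 m) (wd01 m (F := F)) := fun k => by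
    simp [wd01, Fin.succ_ne_zero, CharTwo.add_self_eq_zero]
  have a43 : lwAdj 2 (wc1 m) (wd01 m (F := F)) := fun k => by
    simp [wc1, wd01, Fin.succ_ne_zero, CharTwo.add_self_eq_zero]
  have a44 : lwAdj 2 (wc1 m) (wd10 m (F := F)) := fun k => by
    simp [wc1, wd10, Fin.succ_ne_zero]
  have a14 : lwAdj 2 (wc0 m) (wd10 m (F := F)) := fun k => by
    simp [wc0, wd10, hpow0, Fin.succ_ne_zero]
  -- distinctness
  have i1 : Fin (m + 1) := ⟨1, by omega⟩
  have hi1 : (⟨1, by omega⟩ : Fin (m + 1)) ≠ 0 := by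
    intro hx
    have := congrArg Fin.val hx
    simp at this
  have n01 : wc0 m (F := F) ≠ wc1 m := fun hx => by
    have := congrFun hx 0; simp [wc0, wc1] at this
  have n0d10 : wc0 m (F := F) ≠ wd10 m := fun hx => by
    have := congrFun hx 0; simp [wc0, wd10] at this
  have n0d01 : wc0 m (F := F) ≠ wd01 m := fun hx => by
    have := congrFun hx ⟨1, by omega⟩; simp [wc0, wd01, hi1] at this
  have n1d10 : wc1 m (F := F) ≠ wd10 m := fun hx => by
    have := congrFun hx ⟨1, by omega⟩; simp [wc1, wd10, hi1] at this
  have n1d01 : wc1 m (F := F) ≠ wd01 m := fun hx => by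
    have := congrFun hx 0; simp [wc1, wd01] at this
  have nd : wd10 m (F := F) ≠ wd01 m := fun hx => by
    have := congrFun hx 0; simp [wd10, wd01] at this
  refine ⟨Sum.inl (wc0 m), Walk.cons (adj_step a11) (Walk.cons ((adj_step a21).symm)
    (Walk.cons (adj_step a22) (Walk.cons ((adj_step a32).symm)
    (Walk.cons (adj_step a33) (Walk.cons ((adj_step a43).symm)
    (Walk.cons (adj_step a44) (Walk.cons ((adj_step a14).symm) Walk.nil))))))), ?_, by simp⟩
  rw [Walk.isCycle_def, Walk.isTrail_def]
  refine ⟨?_, by simp, ?_⟩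
  · simp [Sym2.eq_iff, n01, n0d10, n0d01, n1d10, n1d01, nd,
      n01.symm, n0d10.symm, n0d01.symm, n1d10.symm, n1d01.symm, nd.symm]
  · simp [n01, n0d10, n0d01, n1d10, n1d01, nd,
      n01.symm, n0d10.symm, n0d01.symm, n1d10.symm, n1d01.symm, nd.symm]

end Aux

/-- For `p = 2` and either `(e = 1, m = 1)` or `(e ≥ 1, m ≥ 2)`, the linearized Wenger
graph `L_m(2^e)` contains a cycle of length `8`, and its girth is `8`. -/
theorem stmt16 (e m : ℕ) (h : (e = 1 ∧ m = 1) ∨ (1 ≤ e ∧ 2 ≤ m)) :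
    (∃ (v : (Fin (m + 1) → GaloisField 2 e) ⊕ (Fin (m + 1) → GaloisField 2 e))
        (c : (lwGraph 2 (GaloisField 2 e) m).Walk v v), c.IsCycle ∧ c.length = 8) ∧
    (lwGraph 2 (GaloisField 2 e) m).girth = 8 := by
  have hm : 0 < m := by rcases h with ⟨_, h1⟩ | ⟨_, h2⟩ <;> omega
  have hcase : 2 ≤ m ∨ ∀ x : GaloisField 2 e, x = 0 ∨ x = 1 := by
    rcases h with ⟨he, hm1⟩ | ⟨he, hm2⟩
    · right
      subst he
      have hcard : Nat.card (GaloisField 2 1) = 2 := by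
        rw [GaloisField.card 2 1 one_ne_zero]; norm_num
      have hfin : Finite (GaloisField 2 1) :=
        (Nat.card_pos_iff.mp (by rw [hcard]; norm_num)).2
      have : Fintype (GaloisField 2 1) := Fintype.ofFinite _
      intro x
      rcases eq_or_ne x 0 with hx | hx
      · exact Or.inl hx
      · right
        have hq : Fintype.card (GaloisField 2 1) = 2 := by
          rw [← Nat.card_eq_fintype_card, hcard]
        have := FiniteField.pow_card_sub_one_eq_one x hx
        rw [hq] at this
        simpa using this
    · exact Or.inl hm2
  obtain ⟨v, c, hc, hlen⟩ := eight_cycle (F := GaloisField 2 e) hm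
  refine ⟨⟨v, c, hc, hlen⟩, ?_⟩
  have hlb : (8 : ℕ∞) ≤ (lwGraph 2 (GaloisField 2 e) m).egirth := by
    rw [SimpleGraph.le_egirth]
    intro a w hw
    have h3 := hw.three_le_length
    have hev : Even w.length := (walk_even w).mpr rfl
    have h4 := length_ne_four hm w hw
    have h6 := length_ne_six hm hcase w hw
    obtain ⟨t, ht⟩ := hev
    have : 8 ≤ w.length := by omega
    exact_mod_cast this
  have hub : (lwGraph 2 (GaloisField 2 e) m).egirth ≤ 8 := by
    have h1 : (lwGraph 2 (GaloisField 2 e) m).egirth ≤ (c.length : ℕ∞) := by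
      rw [SimpleGraph.egirth]
      exact iInf_le_of_le v (iInf_le_of_le c (iInf_le _ hc))
    rw [hlen] at h1
    exact_mod_cast h1
  have hg : (lwGraph 2 (GaloisField 2 e) m).egirth = 8 := le_antisymm hub hlb
  rw [SimpleGraph.girth, hg]
  rfl
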